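/- arXiv:2101.08203 — 4 statements merged into one kernel-verified Lean document; each statement's English description precedes it below -/
import Mathlib

section
/- Fix T ∈ (0,∞) and t* ∈ (0,T). For each M ∈ ℕ let α_M : [0,t*] → [0,∞) be a differentiable nonnegative function, and suppose there are constants C > 0, C₀ ≥ 0, ε > 0, an integer q ≥ 1, a number α₀ ≥ 0, and M̃ ∈ ℕ, all independent of M and t*, such that for every M ≥ M̃ and every t ∈ [0,t*] one has α_M'(t) ≤ C·(C₀ + α_M(t) + ε·α_M(t)^{q+1}) and α_M(0) = α₀. If ε·e^{TCq}·(α₀+C₀)^q < 1, then for every M ≥ M̃ and every t ∈ [0,t*]: α_M(t) ≤ (α₀+C₀)·e^{TC} / (1 − ε·e^{TCq}·(α₀+C₀)^q)^{1/q} − C₀. -/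
/-!
With `β := α + C₀`, the inequality becomes the Bernoulli-type inequality
`β' ≤ C (β + ε β ^ (q + 1))`. For positive `β` the substitution `u = β ^ (-q)` linearises it,
`u' ≥ -q C (u + ε)`, so `exp (q C t) (β(t) ^ (-q) + ε)` is nondecreasing; comparing with `t = 0`
gives a polynomial bound on `β(t) ^ q`, which passes to nonnegative `β` by continuity
(apply it to `β + δ` and let `δ → 0⁺`). Taking `q`-th roots yields the claim.
-/

open Real Set Filter Topology

theorem monotoneOn_exp_mul_inv_pow_add {D : Set ℝ} {g g' : ℝ → ℝ} {C ε : ℝ} {q : ℕ}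
    (hD : Convex ℝ D) (hderiv : ∀ t ∈ D, HasDerivWithinAt g (g' t) D t)
    (hpos : ∀ t ∈ D, 0 < g t) (hbound : ∀ t ∈ D, g' t ≤ C * (g t + ε * g t ^ (q + 1))) :
    MonotoneOn (fun t => exp (q * C * t) * ((g t ^ q)⁻¹ + ε)) D := by
  have hF : ∀ t ∈ D, HasDerivWithinAt (fun t => exp (q * C * t) * ((g t ^ q)⁻¹ + ε))
      (exp (q * C * t) * (q * C) * ((g t ^ q)⁻¹ + ε) +
        exp (q * C * t) * (-(q * g t ^ (q - 1) * g' t) / (g t ^ q) ^ 2)) D t := by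
    intro t ht
    have hexp : HasDerivWithinAt (fun t => exp (q * C * t)) (exp (q * C * t) * (q * C)) D t := by
      simpa using ((hasDerivAt_id t).const_mul ((q : ℝ) * C)).exp.hasDerivWithinAt
    exact hexp.mul ((((hderiv t ht).pow q).inv (pow_ne_zero _ (hpos t ht).ne')).add_const ε)
  refine monotoneOn_of_hasDerivWithinAt_nonneg hD (fun t ht => (hF t ht).continuousWithinAt)
    (fun t ht => (hF t (interior_subset ht)).mono interior_subset) fun t ht => ?_
  replace ht := interior_subset ht
  set x := g t
  have hx : 0 < x := hpos t ht
  -- `q - 1` truncates at `q = 0`, where both sides vanish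
  have hcoef : (q : ℝ) * x ^ (q - 1) * x = q * x ^ q := by
    rcases q with _ | r
    · simp
    · rw [Nat.add_sub_cancel]; ring
  have hlin : (q : ℝ) * x ^ (q - 1) * g' t ≤ q * C * ((x ^ q)⁻¹ + ε) * (x ^ q) ^ 2 := calc
    (q : ℝ) * x ^ (q - 1) * g' t ≤ q * x ^ (q - 1) * (C * (x + ε * x ^ (q + 1))) := by
      gcongr
      exact hbound t ht
    _ = q * C * ((x ^ q)⁻¹ + ε) * (x ^ q) ^ 2 := by
      field_simp
      linear_combination (C * (1 + ε * x ^ q)) * hcoef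
  have hquot : (q : ℝ) * x ^ (q - 1) * g' t / (x ^ q) ^ 2 ≤ q * C * ((x ^ q)⁻¹ + ε) := by
    rwa [div_le_iff₀ (by positivity)]
  rw [neg_div, mul_neg, ← sub_eq_add_neg, mul_assoc (exp _), ← mul_sub]
  exact mul_nonneg (exp_pos _).le (by linarith)

theorem pow_mul_le_of_bernoulli_of_pos {τ C ε : ℝ} {q : ℕ} {g g' : ℝ → ℝ}
    (hderiv : ∀ t ∈ Icc 0 τ, HasDerivWithinAt g (g' t) (Icc 0 τ) t)
    (hpos : ∀ t ∈ Icc 0 τ, 0 < g t)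
    (hbound : ∀ t ∈ Icc 0 τ, g' t ≤ C * (g t + ε * g t ^ (q + 1)))
    {t : ℝ} (ht : t ∈ Icc 0 τ) :
    g t ^ q * (1 - ε * (exp (q * C * t) - 1) * g 0 ^ q) ≤ exp (q * C * t) * g 0 ^ q := by
  have h0 : (0 : ℝ) ∈ Icc 0 τ := ⟨le_rfl, ht.1.trans ht.2⟩
  have hmono := monotoneOn_exp_mul_inv_pow_add (convex_Icc 0 τ) hderiv hpos hbound h0 ht ht.1
  have hX : 0 < g t ^ q := pow_pos (hpos t ht) q
  have hB : 0 < g 0 ^ q := pow_pos (hpos 0 h0) q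
  simp only [mul_zero, exp_zero, one_mul] at hmono
  have := mul_le_mul_of_nonneg_left hmono (mul_pos hX hB).le
  field_simp at this
  linarith

theorem pow_mul_le_of_bernoulli {τ C ε : ℝ} {q : ℕ} {g g' : ℝ → ℝ} (hC : 0 ≤ C) (hε : 0 ≤ ε)
    (hderiv : ∀ t ∈ Icc 0 τ, HasDerivWithinAt g (g' t) (Icc 0 τ) t)
    (hnonneg : ∀ t ∈ Icc 0 τ, 0 ≤ g t)
    (hbound : ∀ t ∈ Icc 0 τ, g' t ≤ C * (g t + ε * g t ^ (q + 1)))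
    {t : ℝ} (ht : t ∈ Icc 0 τ) :
    g t ^ q * (1 - ε * (exp (q * C * t) - 1) * g 0 ^ q) ≤ exp (q * C * t) * g 0 ^ q := by
  set E := exp (q * C * t)
  have hshift : ∀ δ ∈ Ioi (0 : ℝ),
      (g t + δ) ^ q * (1 - ε * (E - 1) * (g 0 + δ) ^ q) ≤ E * (g 0 + δ) ^ q := by
    intro δ hδ
    refine pow_mul_le_of_bernoulli_of_pos (g := fun s => g s + δ)
      (fun s hs => (hderiv s hs).add_const δ)
      (fun s hs => add_pos_of_nonneg_of_pos (hnonneg s hs) hδ) (fun s hs => ?_) ht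
    calc g' s ≤ C * (g s + ε * g s ^ (q + 1)) := hbound s hs
      _ ≤ C * (g s + δ + ε * (g s + δ) ^ (q + 1)) := by gcongr <;> linarith [hnonneg s hs, mem_Ioi.1 hδ]
  have hlim : ∀ φ : ℝ → ℝ, Continuous φ → Tendsto φ (𝓝[>] 0) (𝓝 (φ 0)) :=
    fun φ hφ => hφ.continuousAt.continuousWithinAt.tendsto
  simpa using le_of_tendsto_of_tendsto (hlim _ (by fun_prop)) (hlim _ (by fun_prop))
    (eventually_nhdsWithin_of_forall hshift)

theorem le_div_rpow_one_div_of_pow_mul_le {x y s : ℝ} {q : ℕ} (hq : q ≠ 0) (hy : 0 ≤ y)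
    (hs : 0 < s) (h : x ^ q * s ≤ y ^ q) : x ≤ y / s ^ ((1 : ℝ) / q) := by
  refine le_of_pow_le_pow_left₀ hq (by positivity) ?_
  rw [div_pow, ← rpow_natCast (s ^ _), ← rpow_mul hs.le, one_div_mul_cancel (by positivity),
    rpow_one, le_div_iff₀ hs]
  exact h

theorem generalized_gronwall_general
    (T tstar : ℝ) (htstar : tstar ∈ Set.Ioo 0 T)
    (α α' : ℕ → ℝ → ℝ)
    (C C₀ ε α₀ : ℝ) (q : ℕ)
    (hC : 0 < C) (hC₀ : 0 ≤ C₀) (hε : 0 < ε) (hq : 1 ≤ q) (hα₀ : 0 ≤ α₀)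
    (Mtilde : ℕ)
    (hderiv : ∀ M, Mtilde ≤ M → ∀ t ∈ Set.Icc 0 tstar,
      HasDerivWithinAt (α M) (α' M t) (Set.Icc 0 tstar) t)
    (hnonneg : ∀ M, Mtilde ≤ M → ∀ t ∈ Set.Icc 0 tstar, 0 ≤ α M t)
    (hbound : ∀ M, Mtilde ≤ M → ∀ t ∈ Set.Icc 0 tstar,
      α' M t ≤ C * (C₀ + α M t + ε * (α M t) ^ (q + 1)))
    (hinit : ∀ M, Mtilde ≤ M → α M 0 = α₀)
    (hsmall : ε * Real.exp (T * C * q) * (α₀ + C₀) ^ q < 1) :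
    ∀ M, Mtilde ≤ M → ∀ t ∈ Set.Icc 0 tstar,
      α M t ≤ (α₀ + C₀) * Real.exp (T * C) /
        (1 - ε * Real.exp (T * C * q) * (α₀ + C₀) ^ q) ^ ((1:ℝ) / (q : ℝ)) - C₀ := by
  intro M hM t ht
  have hβ := pow_mul_le_of_bernoulli (g := fun s => α M s + C₀) hC.le hε.le
    (fun s hs => (hderiv M hM s hs).add_const C₀)
    (fun s hs => add_nonneg (hnonneg M hM s hs) hC₀)
    (fun s hs => (hbound M hM s hs).trans (by
      rw [add_comm C₀]
      gcongr
      exacts [hnonneg M hM s hs, le_add_of_nonneg_right hC₀]))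
    ht
  simp only [hinit M hM] at hβ
  have hE : exp (q * C * t) ≤ exp (T * C * q) := by
    rw [exp_le_exp, show T * C * q = q * C * T by ring]
    gcongr
    exact ht.2.trans htstar.2.le
  have key : (α M t + C₀) ^ q * (1 - ε * exp (T * C * q) * (α₀ + C₀) ^ q) ≤
      ((α₀ + C₀) * exp (T * C)) ^ q := by
    rw [mul_pow, ← exp_nat_mul, mul_comm (q : ℝ) (T * C)]
    have hX : 0 ≤ (α M t + C₀) ^ q := pow_nonneg (add_nonneg (hnonneg M hM t ht) hC₀) q
    have hB : 0 ≤ (α₀ + C₀) ^ q := by positivity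
    linarith [mul_le_mul_of_nonneg_left hE (mul_nonneg hX (mul_nonneg hε.le hB)),
      mul_le_mul_of_nonneg_right hE hB, mul_nonneg hX (mul_nonneg hε.le hB)]
  have := le_div_rpow_one_div_of_pow_mul_le (by omega) (by positivity) (by linarith) key
  linarith

/-- Generalised Gronwall lemma: a sequence of nonnegative differentiable functions on
`[0, t*]` satisfying a superlinear differential inequality with a small coefficient `ε`
on the superlinear term admits a uniform bound. -/
theorem generalized_gronwall
    (T tstar : ℝ) (hT : 0 < T) (htstar : tstar ∈ Set.Ioo 0 T)
    (α α' : ℕ → ℝ → ℝ)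
    (C C₀ ε α₀ : ℝ) (q : ℕ)
    (hC : 0 < C) (hC₀ : 0 ≤ C₀) (hε : 0 < ε) (hq : 1 ≤ q) (hα₀ : 0 ≤ α₀)
    (Mtilde : ℕ)
    (hderiv : ∀ M, Mtilde ≤ M → ∀ t ∈ Set.Icc 0 tstar,
      HasDerivWithinAt (α M) (α' M t) (Set.Icc 0 tstar) t)
    (hnonneg : ∀ M, Mtilde ≤ M → ∀ t ∈ Set.Icc 0 tstar, 0 ≤ α M t)
    (hbound : ∀ M, Mtilde ≤ M → ∀ t ∈ Set.Icc 0 tstar,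
      α' M t ≤ C * (C₀ + α M t + ε * (α M t) ^ (q + 1)))
    (hinit : ∀ M, Mtilde ≤ M → α M 0 = α₀)
    (hsmall : ε * Real.exp (T * C * q) * (α₀ + C₀) ^ q < 1) :
    ∀ M, Mtilde ≤ M → ∀ t ∈ Set.Icc 0 tstar,
      α M t ≤ (α₀ + C₀) * Real.exp (T * C) /
        (1 - ε * Real.exp (T * C * q) * (α₀ + C₀) ^ q) ^ ((1:ℝ) / (q : ℝ)) - C₀ :=
  generalized_gronwall_general T tstar htstar α α' C C₀ ε α₀ q hC hC₀ hε hq hα₀ Mtilde hderiv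
    hnonneg hbound hinit hsmall
end

section
/- For every θ > 0 and δ ∈ (0,1), the regularized logarithmic potential F_δ^log is twice continuously differentiable on ℝ, satisfies 0 ≤ (F_δ^log)''(r) ≤ (θ/2)·(1/δ + 1/(2−δ)) for all r ∈ ℝ — in particular F_δ^log is convex and φ_δ is Lipschitz continuous with Lipschitz constant (θ/2)·(1/δ + 1/(2−δ)) — and F_δ^log(r) ≥ 0 for all r ∈ ℝ. -/
/-!
On `[-(1-δ), 1-δ]` the potential `F_δ^log` is the logarithmic potential
`F^log(s) = (θ/2)((1+s) log(1+s) + (1-s) log(1-s))`, and outside it is continued by the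
second-order Taylor polynomials of `F^log` at the endpoints. Such a continuation of a `C²`
function is `C²`, its second derivative being `(F^log)'' = θ / (1 - s²)` taken at the point
of the interval nearest to `r`; hence
`0 ≤ (F_δ^log)'' ≤ (F^log)''(1-δ) = (θ/2)(1/δ + 1/(2-δ))`. Convexity and the Lipschitz
bound follow, and since `F_δ^log` and its derivative vanish at `0`, convexity makes `0` a
global minimum.
-/

open Real Set

/-- The regularized logarithmic potential `F_δ^log` at temperature `θ`. -/
noncomputable def Flogδ (θ δ : ℝ) (r : ℝ) : ℝ :=
  if 1 - δ ≤ r then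
    (θ/2) * ((1-r) * Real.log δ + (1+r) * Real.log (2-δ)
      + (1-r)^2/(2*δ) + (1+r)^2/(2*(2-δ)) - 1)
  else if r ≤ -(1-δ) then
    (θ/2) * ((1+r) * Real.log δ + (1-r) * Real.log (2-δ)
      + (1+r)^2/(2*δ) + (1-r)^2/(2*(2-δ)) - 1)
  else
    (θ/2) * ((1+r) * Real.log (1+r) + (1-r) * Real.log (1-r))

open Filter Topology

section Gluing

variable {f P : ℝ → ℝ} {d x : ℝ} {s t : Set ℝ}

theorem HasDerivAt.hasDerivWithinAt_of_eqOn (hP : HasDerivAt P d x) (hfP : EqOn f P s)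
    (hs : s ∈ 𝓝[t] x) (hx : x ∈ t) : HasDerivWithinAt f d t x :=
  hP.hasDerivWithinAt.congr_of_eventuallyEq_of_mem (eventually_of_mem hs hfP) hx

theorem hasDerivAt_of_eqOn_Iic_Icc_Ici {a b : ℝ} {f' L M R : ℝ → ℝ}
    (hL : ∀ x ≤ a, HasDerivAt L (f' x) x) (hM : ∀ x ∈ Icc a b, HasDerivAt M (f' x) x)
    (hR : ∀ x, b ≤ x → HasDerivAt R (f' x) x)
    (hfL : EqOn f L (Iic a)) (hfM : EqOn f M (Icc a b)) (hfR : EqOn f R (Ici b)) (x : ℝ) :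
    HasDerivAt f (f' x) x := by
  have from_left : HasDerivWithinAt f (f' x) (Iic x) x := by
    rcases le_or_gt x a with hxa | hax
    · exact (hL x hxa).hasDerivWithinAt_of_eqOn hfL
        (mem_of_superset self_mem_nhdsWithin (Iic_subset_Iic.2 hxa)) self_mem_Iic
    rcases le_or_gt x b with hxb | hbx
    · exact (hM x ⟨hax.le, hxb⟩).hasDerivWithinAt_of_eqOn hfM
        (Icc_mem_nhdsLE_of_mem ⟨hax, hxb⟩) self_mem_Iic
    · exact (hR x hbx.le).hasDerivWithinAt_of_eqOn hfR
        (nhdsWithin_le_nhds (Ici_mem_nhds hbx)) self_mem_Iic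
  have from_right : HasDerivWithinAt f (f' x) (Ici x) x := by
    rcases lt_or_ge x a with hxa | hax
    · exact (hL x hxa.le).hasDerivWithinAt_of_eqOn hfL
        (nhdsWithin_le_nhds (Iic_mem_nhds hxa)) self_mem_Ici
    rcases lt_or_ge x b with hxb | hbx
    · exact (hM x ⟨hax, hxb.le⟩).hasDerivWithinAt_of_eqOn hfM
        (Icc_mem_nhdsGE_of_mem ⟨hax, hxb⟩) self_mem_Ici
    · exact (hR x hbx).hasDerivWithinAt_of_eqOn hfR
        (mem_of_superset self_mem_nhdsWithin (Ici_subset_Ici.2 hbx)) self_mem_Ici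
  simpa using from_left.union from_right

end Gluing

def clampIcc (a b r : ℝ) : ℝ := max a (min b r)

section TaylorExtension

variable {a b r : ℝ} {g g' g'' : ℝ → ℝ}

theorem clampIcc_of_le (h : r ≤ a) : clampIcc a b r = a :=
  max_eq_left ((min_le_right _ _).trans h)

theorem clampIcc_of_mem (h : r ∈ Icc a b) : clampIcc a b r = r := by
  rw [clampIcc, min_eq_right h.2, max_eq_right h.1]

theorem clampIcc_of_ge (hab : a ≤ b) (h : b ≤ r) : clampIcc a b r = b := by
  rw [clampIcc, min_eq_left h, max_eq_right hab]

theorem clampIcc_mem (hab : a ≤ b) (r : ℝ) : clampIcc a b r ∈ Icc a b :=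
  ⟨le_max_left _ _, max_le hab (min_le_left _ _)⟩

theorem continuous_clampIcc (a b : ℝ) : Continuous (clampIcc a b) :=
  continuous_const.max (continuous_const.min continuous_id)

noncomputable def taylorExtend₁ (a b : ℝ) (g g' : ℝ → ℝ) (r : ℝ) : ℝ :=
  g (clampIcc a b r) + g' (clampIcc a b r) * (r - clampIcc a b r)

noncomputable def taylorExtend₂ (a b : ℝ) (g g' g'' : ℝ → ℝ) (r : ℝ) : ℝ :=
  g (clampIcc a b r) + g' (clampIcc a b r) * (r - clampIcc a b r)
    + g'' (clampIcc a b r) / 2 * (r - clampIcc a b r) ^ 2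

theorem hasDerivAt_taylorExtend₁ (hab : a ≤ b) (hg : ∀ s ∈ Icc a b, HasDerivAt g (g' s) s)
    (r : ℝ) : HasDerivAt (taylorExtend₁ a b g g') (g' (clampIcc a b r)) r := by
  have hlin (c x : ℝ) : HasDerivAt (fun x => g c + g' c * (x - c)) (g' c) x := by
    simpa using ((hasDerivAt_id x).sub_const c).const_mul (g' c) |>.const_add (g c)
  refine hasDerivAt_of_eqOn_Iic_Icc_Ici (a := a) (b := b) (f' := fun x => g' (clampIcc a b x))
    (L := fun x => g a + g' a * (x - a)) (M := g)
    (R := fun x => g b + g' b * (x - b)) ?_ ?_ ?_ ?_ ?_ ?_ r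
  · intro x hx
    simpa only [clampIcc_of_le hx] using hlin a x
  · intro x hx
    simpa only [clampIcc_of_mem hx] using hg x hx
  · intro x hx
    simpa only [clampIcc_of_ge hab hx] using hlin b x
  · intro x hx
    simp only [taylorExtend₁, clampIcc_of_le (mem_Iic.1 hx)]
  · intro x hx
    simp [taylorExtend₁, clampIcc_of_mem hx]
  · intro x hx
    simp only [taylorExtend₁, clampIcc_of_ge hab (mem_Ici.1 hx)]

theorem hasDerivAt_taylorExtend₂ (hab : a ≤ b) (hg : ∀ s ∈ Icc a b, HasDerivAt g (g' s) s)
    (r : ℝ) : HasDerivAt (taylorExtend₂ a b g g' g'') (taylorExtend₁ a b g' g'' r) r := by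
  have hquad (c x : ℝ) : HasDerivAt (fun x => g c + g' c * (x - c) + g'' c / 2 * (x - c) ^ 2)
      (g' c + g'' c * (x - c)) x := by
    have hx : HasDerivAt (fun x => x - c) 1 x := (hasDerivAt_id x).sub_const c
    refine (((hx.const_mul (g' c)).const_add (g c)).add
      ((hx.pow 2).const_mul (g'' c / 2))).congr_deriv ?_
    norm_num
    ring
  refine hasDerivAt_of_eqOn_Iic_Icc_Ici (a := a) (b := b) (f' := taylorExtend₁ a b g' g'')
    (L := fun x => g a + g' a * (x - a) + g'' a / 2 * (x - a) ^ 2) (M := g)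
    (R := fun x => g b + g' b * (x - b) + g'' b / 2 * (x - b) ^ 2)
    ?_ ?_ ?_ ?_ ?_ ?_ r
  · intro x hx
    simpa only [taylorExtend₁, clampIcc_of_le hx] using hquad a x
  · intro x hx
    simpa [taylorExtend₁, clampIcc_of_mem hx] using hg x hx
  · intro x hx
    simpa only [taylorExtend₁, clampIcc_of_ge hab hx] using hquad b x
  · intro x hx
    simp only [taylorExtend₂, clampIcc_of_le (mem_Iic.1 hx)]
  · intro x hx
    simp [taylorExtend₂, clampIcc_of_mem hx]
  · intro x hx
    simp only [taylorExtend₂, clampIcc_of_ge hab (mem_Ici.1 hx)]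

end TaylorExtension

theorem contDiff_two_of_hasDerivAt {f f' f'' : ℝ → ℝ} (hf : ∀ x, HasDerivAt f (f' x) x)
    (hf' : ∀ x, HasDerivAt f' (f'' x) x) (hf'' : Continuous f'') : ContDiff ℝ 2 f := by
  have hdf : deriv f = f' := funext fun x => (hf x).deriv
  have hdf' : deriv f' = f'' := funext fun x => (hf' x).deriv
  rw [show (2 : WithTop ℕ∞) = 1 + 1 from rfl, contDiff_succ_iff_deriv, hdf,
    contDiff_one_iff_deriv, hdf']
  exact ⟨fun x => (hf x).differentiableAt, by simp, fun x => (hf' x).differentiableAt, hf''⟩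

theorem lipschitzWith_of_hasDerivAt_of_abs_le {f f' : ℝ → ℝ} {K : ℝ}
    (hf : ∀ x, HasDerivAt f (f' x) x) (hK : ∀ x, |f' x| ≤ K) : LipschitzWith K.toNNReal f :=
  lipschitzOnWith_univ.1 <| convex_univ.lipschitzOnWith_of_nnnorm_hasDerivWithin_le
    (fun x _ => (hf x).hasDerivWithinAt) fun x _ => by
      rw [← NNReal.coe_le_coe, coe_nnnorm, Real.norm_eq_abs, Real.coe_toNNReal']
      exact (hK x).trans (le_max_left _ _)

theorem ConvexOn.isMinOn_univ_of_hasDerivAt_zero {f : ℝ → ℝ} {x : ℝ}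
    (hf : ConvexOn ℝ univ f) (hd : HasDerivAt f 0 x) : IsMinOn f univ x :=
  hf.isMinOn_of_rightDeriv_eq_zero (by simp)
    (hd.hasDerivWithinAt.derivWithin (uniqueDiffWithinAt_Ioi x))

section LogPotential

variable {θ s : ℝ}

noncomputable def Flog (θ s : ℝ) : ℝ :=
  θ / 2 * ((1 + s) * log (1 + s) + (1 - s) * log (1 - s))

noncomputable def φlog (θ s : ℝ) : ℝ :=
  θ / 2 * (log (1 + s) - log (1 - s))

noncomputable def ψlog (θ s : ℝ) : ℝ :=
  θ / 2 * (1 / (1 + s) + 1 / (1 - s))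

theorem hasDerivAt_Flog (hs : s ∈ Ioo (-1) 1) : HasDerivAt (Flog θ) (φlog θ s) s := by
  have hp : 1 + s ≠ 0 := by linarith [hs.1]
  have hm : 1 - s ≠ 0 := by linarith [hs.2]
  have hp' : HasDerivAt (fun s => 1 + s) 1 s := (hasDerivAt_id s).const_add 1
  have hm' : HasDerivAt (fun s => 1 - s) (-1) s := by
    simpa using (hasDerivAt_id s).const_sub 1
  refine (((hp'.mul (hp'.log hp)).add (hm'.mul (hm'.log hm))).const_mul (θ / 2)).congr_deriv ?_
  rw [φlog]
  field_simp
  ring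

theorem hasDerivAt_φlog (hs : s ∈ Ioo (-1) 1) : HasDerivAt (φlog θ) (ψlog θ s) s := by
  have hp : 1 + s ≠ 0 := by linarith [hs.1]
  have hm : 1 - s ≠ 0 := by linarith [hs.2]
  have hp' : HasDerivAt (fun s => 1 + s) 1 s := (hasDerivAt_id s).const_add 1
  have hm' : HasDerivAt (fun s => 1 - s) (-1) s := by
    simpa using (hasDerivAt_id s).const_sub 1
  refine (((hp'.log hp).sub (hm'.log hm)).const_mul (θ / 2)).congr_deriv ?_
  rw [ψlog]
  ring

theorem continuousOn_ψlog : ContinuousOn (ψlog θ) (Ioo (-1) 1) := by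
  intro s hs
  have hp : 1 + s ≠ 0 := by linarith [hs.1]
  have hm : 1 - s ≠ 0 := by linarith [hs.2]
  unfold ψlog
  fun_prop (disch := assumption)

theorem ψlog_nonneg (hθ : 0 ≤ θ) (hs : s ∈ Ioo (-1) 1) : 0 ≤ ψlog θ s := by
  have hp : 0 < 1 + s := by linarith [hs.1]
  have hm : 0 < 1 - s := by linarith [hs.2]
  unfold ψlog
  positivity

theorem ψlog_le_of_abs_le (hθ : 0 ≤ θ) {t : ℝ} (hst : |s| ≤ t) (ht : t < 1) :
    ψlog θ s ≤ ψlog θ t := by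
  have hs : s ^ 2 ≤ t ^ 2 := sq_le_sq' (abs_le.1 hst).1 ((le_abs_self s).trans hst)
  have ht' : 0 < 1 - t ^ 2 := by nlinarith [(abs_nonneg s).trans hst]
  have ψlog_eq (u : ℝ) (hu : u ^ 2 < 1) : ψlog θ u = θ / (1 - u ^ 2) := by
    have hp : 1 + u ≠ 0 := by nlinarith
    have hm : 1 - u ≠ 0 := by nlinarith
    have hpm : 1 - u ^ 2 ≠ 0 := by linarith
    rw [ψlog]
    field_simp
    ring
  rw [ψlog_eq s (by linarith), ψlog_eq t (by linarith)]
  gcongr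

end LogPotential

section Regularized

variable {θ δ : ℝ}

noncomputable def φlogδ (θ δ : ℝ) : ℝ → ℝ :=
  taylorExtend₁ (-(1 - δ)) (1 - δ) (φlog θ) (ψlog θ)

noncomputable def ψlogδ (θ δ r : ℝ) : ℝ :=
  ψlog θ (clampIcc (-(1 - δ)) (1 - δ) r)

theorem Icc_neg_sub_subset_Ioo (hδ : δ ∈ Ioo (0 : ℝ) 1) :
    Icc (-(1 - δ)) (1 - δ) ⊆ Ioo (-1) 1 :=
  Icc_subset_Ioo (by linarith [hδ.1]) (by linarith [hδ.1])

theorem clampIcc_mem_Ioo (hδ : δ ∈ Ioo (0 : ℝ) 1) (r : ℝ) :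
    clampIcc (-(1 - δ)) (1 - δ) r ∈ Ioo (-1) 1 :=
  Icc_neg_sub_subset_Ioo hδ (clampIcc_mem (by linarith [hδ.2]) r)

theorem Flogδ_eq_taylorExtend₂ (hδ : δ ∈ Ioo (0 : ℝ) 1) :
    Flogδ θ δ = taylorExtend₂ (-(1 - δ)) (1 - δ) (Flog θ) (φlog θ) (ψlog θ) := by
  obtain ⟨hδ0, hδ1⟩ := hδ
  have h2δ : 2 - δ ≠ 0 := by linarith
  funext r
  unfold Flogδ taylorExtend₂ Flog φlog ψlog
  split_ifs with hr hr'
  · rw [clampIcc_of_ge (by linarith) hr, show 1 + (1 - δ) = 2 - δ by ring, sub_sub_cancel]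
    field_simp
    ring
  · rw [clampIcc_of_le hr', show 1 + -(1 - δ) = δ by ring, show 1 - -(1 - δ) = 2 - δ by ring]
    field_simp
    ring
  · rw [clampIcc_of_mem ⟨by linarith, by linarith⟩]
    ring

theorem hasDerivAt_Flogδ (hδ : δ ∈ Ioo (0 : ℝ) 1) (r : ℝ) :
    HasDerivAt (Flogδ θ δ) (φlogδ θ δ r) r := by
  rw [Flogδ_eq_taylorExtend₂ hδ]
  exact hasDerivAt_taylorExtend₂ (by linarith [hδ.2])
    (fun s hs => hasDerivAt_Flog (Icc_neg_sub_subset_Ioo hδ hs)) r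

theorem hasDerivAt_φlogδ (hδ : δ ∈ Ioo (0 : ℝ) 1) (r : ℝ) :
    HasDerivAt (φlogδ θ δ) (ψlogδ θ δ r) r :=
  hasDerivAt_taylorExtend₁ (by linarith [hδ.2])
    (fun s hs => hasDerivAt_φlog (Icc_neg_sub_subset_Ioo hδ hs)) r

theorem continuous_ψlogδ (hδ : δ ∈ Ioo (0 : ℝ) 1) : Continuous (ψlogδ θ δ) :=
  continuousOn_ψlog.comp_continuous (continuous_clampIcc _ _) (clampIcc_mem_Ioo hδ)

theorem ψlogδ_nonneg (hθ : 0 ≤ θ) (hδ : δ ∈ Ioo (0 : ℝ) 1) (r : ℝ) :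
    0 ≤ ψlogδ θ δ r :=
  ψlog_nonneg hθ (clampIcc_mem_Ioo hδ r)

theorem ψlogδ_le (hθ : 0 ≤ θ) (hδ : δ ∈ Ioo (0 : ℝ) 1) (r : ℝ) :
    ψlogδ θ δ r ≤ θ / 2 * (1 / δ + 1 / (2 - δ)) :=
  calc ψlogδ θ δ r ≤ ψlog θ (1 - δ) :=
        ψlog_le_of_abs_le hθ (abs_le.2 (clampIcc_mem (by linarith [hδ.2]) r))
          (by linarith [hδ.1])
    _ = θ / 2 * (1 / δ + 1 / (2 - δ)) := by
        rw [ψlog, sub_sub_cancel, show 1 + (1 - δ) = 2 - δ by ring, add_comm (1 / (2 - δ))]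

theorem Flogδ_zero (hδ : δ < 1) : Flogδ θ δ 0 = 0 := by
  rw [Flogδ, if_neg (not_le.2 (by linarith)), if_neg (not_le.2 (by linarith))]
  simp

theorem φlogδ_zero (hδ : δ ≤ 1) : φlogδ θ δ 0 = 0 := by
  rw [φlogδ, taylorExtend₁, clampIcc_of_mem ⟨by linarith, by linarith⟩]
  simp [φlog]

end Regularized

/-- `F_δ^log` is `C²`, with `0 ≤ (F_δ^log)'' ≤ (θ/2)(1/δ + 1/(2−δ))`; in particular it
is convex and its derivative `φ_δ` is Lipschitz with that constant; moreover
`F_δ^log ≥ 0`. -/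
theorem Flogδ_regularity_convexity_nonneg
    (θ δ : ℝ) (hθ : 0 < θ) (hδ : δ ∈ Set.Ioo (0:ℝ) 1) :
    ContDiff ℝ 2 (Flogδ θ δ) ∧
    (∀ r : ℝ, 0 ≤ deriv (deriv (Flogδ θ δ)) r ∧
      deriv (deriv (Flogδ θ δ)) r ≤ (θ/2) * (1/δ + 1/(2-δ))) ∧
    ConvexOn ℝ Set.univ (Flogδ θ δ) ∧
    LipschitzWith ((θ/2) * (1/δ + 1/(2-δ))).toNNReal (deriv (Flogδ θ δ)) ∧
    (∀ r : ℝ, 0 ≤ Flogδ θ δ r) := by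
  have hF := hasDerivAt_Flogδ (θ := θ) hδ
  have hφ := hasDerivAt_φlogδ (θ := θ) hδ
  have hψ_nonneg := ψlogδ_nonneg hθ.le hδ
  have hψ_le := ψlogδ_le hθ.le hδ
  have hdF : deriv (Flogδ θ δ) = φlogδ θ δ := funext fun r => (hF r).deriv
  have hd2F : deriv (deriv (Flogδ θ δ)) = ψlogδ θ δ := hdF ▸ funext fun r => (hφ r).deriv
  have hconvex : ConvexOn ℝ univ (Flogδ θ δ) :=
    convexOn_of_hasDerivWithinAt2_nonneg convex_univ
      (continuous_iff_continuousAt.2 fun r => (hF r).continuousAt).continuousOn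
      (fun r _ => (hF r).hasDerivWithinAt) (fun r _ => (hφ r).hasDerivWithinAt)
      fun r _ => hψ_nonneg r
  refine ⟨contDiff_two_of_hasDerivAt hF hφ (continuous_ψlogδ hδ),
    fun r => hd2F ▸ ⟨hψ_nonneg r, hψ_le r⟩, hconvex,
    hdF ▸ lipschitzWith_of_hasDerivAt_of_abs_le hφ
      fun r => (abs_of_nonneg (hψ_nonneg r)).trans_le (hψ_le r),
    fun r => ?_⟩
  have hmin := hconvex.isMinOn_univ_of_hasDerivAt_zero ((hF 0).congr_deriv (φlogδ_zero hδ.2.le))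
  exact Flogδ_zero hδ.2 ▸ hmin (mem_univ r)
end

section
/- For every θ ∈ (0,1], δ ∈ (0,1), and r ∈ ℝ: r·φ_δ(r) ≥ 0 and |φ_δ(r)| ≤ r·φ_δ(r) + 1. -/
/-!
`φ_δ` is odd, so it suffices to take `r ≥ 0`. There `φ_δ = (θ/2) g` with `g ≥ 0`, and since
`θ ≤ 1` the growth bound `(1 - r) φ_δ ≤ 1` follows from `(1 - r) g ≤ 2`. On `[0, 1-δ)`,
`g = log (1+r) - log (1-r)` and each of `(1-r) log (1+r)` and `-(1-r) log (1-r)` is at most `r`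
by `log x ≤ x - 1`. On `[1-δ, ∞)` the potential is the quadratic Taylor polynomial of the
logarithmic one at `1 - δ` (so it is differentiable across the junction), `g` is affine, and the
same bound applied to `log (2-δ)` and `-log δ` gives `(1 - r) g ≤ 2 - r`.
-/

open Real Set

open Filter Topology

noncomputable def logPotential (θ r : ℝ) : ℝ :=
  (θ/2) * ((1+r) * log (1+r) + (1-r) * log (1-r))

/-- The second-order Taylor polynomial of `logPotential θ` at `1 - δ`. -/
noncomputable def logPotentialTaylor (θ δ r : ℝ) : ℝ :=
  (θ/2) * ((1-r) * log δ + (1+r) * log (2-δ) + (1-r)^2/(2*δ) + (1+r)^2/(2*(2-δ)) - 1)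

lemma hasDerivAt_logPotential (θ : ℝ) {r : ℝ} (hr : r ∈ Ioo (-1) 1) :
    HasDerivAt (logPotential θ) ((θ/2) * (log (1+r) - log (1-r))) r := by
  have h1 : HasDerivAt (fun x : ℝ => 1 + x) 1 r := (hasDerivAt_id r).const_add 1
  have h2 : HasDerivAt (fun x : ℝ => 1 - x) (-1) r := by
    simpa using (hasDerivAt_id r).const_sub 1
  have hp : 1 + r ≠ 0 := by linarith [hr.1]
  have hm : 1 - r ≠ 0 := by linarith [hr.2]
  refine (((h1.mul (h1.log hp)).add (h2.mul (h2.log hm))).const_mul (θ/2)).congr_deriv ?_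
  field_simp
  ring

lemma hasDerivAt_logPotentialTaylor (θ δ r : ℝ) :
    HasDerivAt (logPotentialTaylor θ δ)
      ((θ/2) * (log (2-δ) - log δ - (1-r)/δ + (1+r)/(2-δ))) r := by
  have h1 : HasDerivAt (fun x : ℝ => 1 + x) 1 r := (hasDerivAt_id r).const_add 1
  have h2 : HasDerivAt (fun x : ℝ => 1 - x) (-1) r := by
    simpa using (hasDerivAt_id r).const_sub 1
  refine ((((((h2.mul_const (log δ)).add (h1.mul_const (log (2-δ)))).add
      ((h2.pow 2).div_const (2*δ))).add ((h1.pow 2).div_const (2*(2-δ)))).sub_const 1).const_mul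
      (θ/2)).congr_deriv ?_
  simp only [Nat.cast_ofNat, div_eq_mul_inv, mul_inv]
  ring

lemma HasDerivAt.of_eventuallyEq_Iic_Ici {f g h : ℝ → ℝ} {a d : ℝ} (hg : HasDerivAt g d a)
    (hh : HasDerivAt h d a) (hfg : f =ᶠ[𝓝[≤] a] g) (hfh : f =ᶠ[𝓝[≥] a] h) :
    HasDerivAt f d a := by
  have hleft := hg.hasDerivWithinAt.congr_of_eventuallyEq hfg (hfg.eq_of_nhdsWithin self_mem_Iic)
  have hright := hh.hasDerivWithinAt.congr_of_eventuallyEq hfh (hfh.eq_of_nhdsWithin self_mem_Ici)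
  simpa [Iic_union_Ici] using hleft.union hright

section Flogδ

variable {θ δ r : ℝ}

lemma Flogδ_of_le (h : 1 - δ ≤ r) : Flogδ θ δ r = logPotentialTaylor θ δ r := if_pos h

lemma Flogδ_of_mem_Ioo (h : r ∈ Ioo (-(1-δ)) (1-δ)) : Flogδ θ δ r = logPotential θ r := by
  rw [Flogδ, if_neg (not_le.mpr h.2), if_neg (not_le.mpr h.1), logPotential]

lemma Flogδ_neg (hδ : δ < 1) (r : ℝ) : Flogδ θ δ (-r) = Flogδ θ δ r := by
  simp only [Flogδ]
  split_ifs <;> first | linarith | ring_nf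

lemma deriv_Flogδ_neg (hδ : δ < 1) (r : ℝ) : deriv (Flogδ θ δ) (-r) = -deriv (Flogδ θ δ) r := by
  have := deriv_comp_neg (f := Flogδ θ δ) (x := r)
  simp only [Flogδ_neg hδ] at this
  linarith

lemma logPotentialTaylor_one_sub (hδ₀ : δ ≠ 0) (hδ₂ : 2 - δ ≠ 0) :
    logPotentialTaylor θ δ (1 - δ) = logPotential θ (1 - δ) := by
  rw [logPotentialTaylor, logPotential, show 1 - (1 - δ) = δ by ring,
    show 1 + (1 - δ) = 2 - δ by ring, sq, sq, mul_comm 2 δ, mul_comm 2 (2 - δ),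
    mul_div_mul_left _ _ hδ₀, mul_div_mul_left _ _ hδ₂]
  ring

lemma hasDerivAt_Flogδ_of_mem_Ioo (hδ : 0 ≤ δ) (hr : r ∈ Ioo (-(1-δ)) (1-δ)) :
    HasDerivAt (Flogδ θ δ) ((θ/2) * (log (1+r) - log (1-r))) r := by
  have hEq : Flogδ θ δ =ᶠ[𝓝 r] logPotential θ :=
    eventually_of_mem (Ioo_mem_nhds hr.1 hr.2) fun _ hy => Flogδ_of_mem_Ioo hy
  exact (hasDerivAt_logPotential θ ⟨by linarith [hr.1], by linarith [hr.2]⟩).congr_of_eventuallyEq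
    hEq

lemma hasDerivAt_Flogδ_of_le (hδ : δ ∈ Ioo 0 1) (hr : 1 - δ ≤ r) :
    HasDerivAt (Flogδ θ δ) ((θ/2) * (log (2-δ) - log δ - (1-r)/δ + (1+r)/(2-δ))) r := by
  have hTaylor : Flogδ θ δ =ᶠ[𝓝[≥] r] logPotentialTaylor θ δ :=
    eventually_nhdsWithin_of_forall fun _ hy => Flogδ_of_le (hr.trans hy)
  rcases hr.lt_or_eq with hlt | rfl
  · exact (hasDerivAt_logPotentialTaylor θ δ r).congr_of_eventuallyEq
      (eventually_of_mem (Ioi_mem_nhds hlt) fun _ hy => Flogδ_of_le (le_of_lt hy))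
  have hδ₀ : δ ≠ 0 := hδ.1.ne'
  have hδ₂ : 2 - δ ≠ 0 := by linarith [hδ.2]
  have hslope : (θ/2) * (log (2-δ) - log δ - (1-(1-δ))/δ + (1+(1-δ))/(2-δ))
      = (θ/2) * (log (1+(1-δ)) - log (1-(1-δ))) := by
    rw [show 1 - (1 - δ) = δ by ring, show 1 + (1 - δ) = 2 - δ by ring, div_self hδ₀,
      div_self hδ₂]
    ring
  have hLog : Flogδ θ δ =ᶠ[𝓝[≤] (1-δ)] logPotential θ := by
    filter_upwards [Ioc_mem_nhdsLE (show -(1-δ) < 1-δ by linarith [hδ.2])] with y hy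
    rcases hy.2.lt_or_eq with hlt | rfl
    · exact Flogδ_of_mem_Ioo ⟨hy.1, hlt⟩
    · exact (Flogδ_of_le le_rfl).trans (logPotentialTaylor_one_sub hδ₀ hδ₂)
  have hTaylorDeriv := hasDerivAt_logPotentialTaylor θ δ (1 - δ)
  rw [hslope] at hTaylorDeriv ⊢
  exact HasDerivAt.of_eventuallyEq_Iic_Ici
    (hasDerivAt_logPotential θ ⟨by linarith [hδ.2], by linarith [hδ.1]⟩) hTaylorDeriv hLog hTaylor

end Flogδ

lemma log_one_sub_le_log_one_add {r : ℝ} (hr₀ : 0 ≤ r) (hr₁ : r < 1) :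
    log (1 - r) ≤ log (1 + r) :=
  log_le_log (by linarith) (by linarith)

lemma one_sub_mul_log_one_add_sub_log_one_sub_le {r : ℝ} (hr₀ : 0 ≤ r) (hr₁ : r < 1) :
    (1 - r) * (log (1 + r) - log (1 - r)) ≤ 2 * r := by
  have hpos : 0 < 1 - r := by linarith
  have hlog_add : (1 - r) * log (1 + r) ≤ r := by
    have h₀ : 0 ≤ log (1 + r) := log_nonneg (by linarith)
    have h₁ : log (1 + r) ≤ r := by linarith [log_le_sub_one_of_pos (by linarith : 0 < 1 + r)]
    nlinarith
  have hlog_sub : -((1 - r) * log (1 - r)) ≤ r := by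
    have h := mul_le_mul_of_nonneg_left (one_sub_inv_le_log_of_pos hpos) hpos.le
    rw [mul_sub, mul_one, mul_inv_cancel₀ hpos.ne'] at h
    linarith
  linarith

section Taylor

variable {δ r : ℝ}

lemma logPotentialTaylor_slope_nonneg (hδ : δ ∈ Ioo 0 1) (hr : 1 - δ ≤ r) :
    0 ≤ log (2-δ) - log δ - (1-r)/δ + (1+r)/(2-δ) := by
  have h₁ : 0 ≤ log (2 - δ) := log_nonneg (by linarith [hδ.2])
  have h₂ : log δ ≤ 0 := log_nonpos hδ.1.le hδ.2.le
  have h₃ : (1 - r) / δ ≤ 1 := by rw [div_le_one hδ.1]; linarith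
  have h₄ : 1 ≤ (1 + r) / (2 - δ) := by rw [le_div_iff₀ (by linarith [hδ.2])]; linarith
  linarith

lemma one_sub_mul_logPotentialTaylor_slope_le (hδ : δ ∈ Ioo 0 1) (hr : 1 - δ ≤ r) :
    (1 - r) * (log (2-δ) - log δ - (1-r)/δ + (1+r)/(2-δ)) ≤ 2 := by
  obtain ⟨hδ₀, hδ₁⟩ := hδ
  have h2δ : 0 < 2 - δ := by linarith
  rcases le_or_gt 1 r with hr₁ | hr₁
  · nlinarith [logPotentialTaylor_slope_nonneg ⟨hδ₀, hδ₁⟩ hr]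
  have hs : 0 < 1 - r := by linarith
  have hlog_two_sub : log (2 - δ) ≤ 1 - δ := by linarith [log_le_sub_one_of_pos h2δ]
  have hlog : -log δ ≤ δ⁻¹ - 1 := by linarith [one_sub_inv_le_log_of_pos hδ₀]
  have hfrac : (1 + r) / (2 - δ) ≤ 2 := by rw [div_le_iff₀ h2δ]; linarith
  calc (1 - r) * (log (2-δ) - log δ - (1-r)/δ + (1+r)/(2-δ))
      ≤ (1 - r) * ((1 - δ) + (δ⁻¹ - 1) - (1-r)/δ + 2) :=
        mul_le_mul_of_nonneg_left (by linarith) hs.le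
    _ = (1 - r) * r / δ + (1 - r) * (2 - δ) := by field_simp; ring
    _ ≤ r + (1 - r) * 2 := by
        gcongr
        · rw [div_le_iff₀ hδ₀]; nlinarith
        · linarith
    _ ≤ 2 := by linarith

end Taylor

lemma sign_and_growth_of_one_sub_mul_le {θ g r : ℝ} (hθ₀ : 0 ≤ θ) (hθ₁ : θ ≤ 1) (hr : 0 ≤ r)
    (hg : 0 ≤ g) (h : (1 - r) * g ≤ 2) :
    0 ≤ r * ((θ/2) * g) ∧ |(θ/2) * g| ≤ r * ((θ/2) * g) + 1 := by
  have hφ : 0 ≤ (θ/2) * g := mul_nonneg (by linarith) hg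
  refine ⟨mul_nonneg hr hφ, ?_⟩
  rw [abs_of_nonneg hφ]
  nlinarith [mul_le_mul_of_nonneg_left h (by linarith : 0 ≤ θ/2)]

/-- Sign and growth bounds for `φ_δ = (F_δ^log)'`: for all `r`, `r·φ_δ(r) ≥ 0` and
`|φ_δ(r)| ≤ r·φ_δ(r) + 1`. -/
theorem Flogδ_deriv_sign_and_growth
    (θ δ : ℝ) (hθ : θ ∈ Set.Ioc (0:ℝ) 1) (hδ : δ ∈ Set.Ioo (0:ℝ) 1) :
    ∀ r : ℝ, 0 ≤ r * deriv (Flogδ θ δ) r ∧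
      |deriv (Flogδ θ δ) r| ≤ r * deriv (Flogδ θ δ) r + 1 := by
  intro r
  wlog hr : 0 ≤ r generalizing r
  · have h := this (-r) (by linarith)
    rwa [deriv_Flogδ_neg hδ.2, neg_mul_neg, abs_neg] at h
  rcases lt_or_ge r (1 - δ) with hmid | hright
  · rw [(hasDerivAt_Flogδ_of_mem_Ioo hδ.1.le ⟨by linarith [hδ.2], hmid⟩).deriv]
    have hr₁ : r < 1 := by linarith [hδ.1]
    exact sign_and_growth_of_one_sub_mul_le hθ.1.le hθ.2 hr
      (sub_nonneg.mpr (log_one_sub_le_log_one_add hr hr₁))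
      (by linarith [one_sub_mul_log_one_add_sub_log_one_sub_le hr hr₁])
  · rw [(hasDerivAt_Flogδ_of_le hδ hright).deriv]
    exact sign_and_growth_of_one_sub_mul_le hθ.1.le hθ.2 hr
      (logPotentialTaylor_slope_nonneg hδ hright)
      (one_sub_mul_logPotentialTaylor_slope_le hδ hright)
end

section
/- Let θ > 0, K ≥ 0, and let (X, μ) be a finite measure space. There exist constants C₁, C₂ > 0, depending only on θ, K and μ(X), such that for every δ ∈ (0,1) and every measurable u : X → ℝ with ∫_X F_δ^log(u) dμ ≤ K, one has ∫_X max(u−1, 0) dμ + ∫_X max(−1−u, 0) dμ ≤ C₁/|log δ| + C₂·δ. -/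
open Real Set MeasureTheory

/-!
Outside `[-1, 1]` the regularized potential grows at least linearly with slope `θ |log δ| / 2`:
for `r ≥ 1` the term `(1 - r) log δ` equals `(r - 1) |log δ|`, the quadratic term
`(1 + r)² / (2 (2 - δ)) ≥ 1` absorbs the `-1`, and all other terms are nonnegative; `r ≤ -1` is
symmetric. Hence `[u - 1]₊ + [-1 - u]₊ ≤ 2 F_δ^log(u) / (θ |log δ|)` pointwise, and integrating
gives the bound with `C₁ = 2 max(K, 1) / θ`.
-/

lemma Flogδ_ge_of_one_le {θ δ r : ℝ} (hθ : 0 ≤ θ) (hδ0 : 0 < δ) (hδ1 : δ < 1) (hr : 1 ≤ r) :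
    θ / 2 * |log δ| * (r - 1) ≤ Flogδ θ δ r := by
  rw [Flogδ, if_pos (by linarith), abs_of_neg (log_neg hδ0 hδ1), mul_assoc]
  gcongr
  have hquad : 1 ≤ (1 + r) ^ 2 / (2 * (2 - δ)) := by
    rw [le_div_iff₀ (by linarith)]
    nlinarith
  have hlog : 0 ≤ (1 + r) * log (2 - δ) := mul_nonneg (by linarith) (log_nonneg (by linarith))
  have hsq : 0 ≤ (1 - r) ^ 2 / (2 * δ) := by positivity
  linarith

lemma Flogδ_ge_of_le_neg_one {θ δ r : ℝ} (hθ : 0 ≤ θ) (hδ0 : 0 < δ) (hδ1 : δ < 1)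
    (hr : r ≤ -1) : θ / 2 * |log δ| * (-1 - r) ≤ Flogδ θ δ r := by
  rw [Flogδ, if_neg (by linarith), if_pos (by linarith), abs_of_neg (log_neg hδ0 hδ1), mul_assoc]
  gcongr
  have hquad : 1 ≤ (1 - r) ^ 2 / (2 * (2 - δ)) := by
    rw [le_div_iff₀ (by linarith)]
    nlinarith
  have hlog : 0 ≤ (1 - r) * log (2 - δ) := mul_nonneg (by linarith) (log_nonneg (by linarith))
  have hsq : 0 ≤ (1 + r) ^ 2 / (2 * δ) := by positivity
  linarith

lemma Flogδ_ge_dist_Icc {θ δ r : ℝ} (hθ : 0 ≤ θ) (hδ0 : 0 < δ) (hδ1 : δ < 1) :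
    θ / 2 * |log δ| * (max (r - 1) 0 + max (-1 - r) 0) ≤ max (Flogδ θ δ r) 0 := by
  rcases le_or_gt 1 r with hr | hr
  · rw [max_eq_left (by linarith), max_eq_right (by linarith), add_zero]
    exact (Flogδ_ge_of_one_le hθ hδ0 hδ1 hr).trans (le_max_left _ _)
  rcases le_or_gt r (-1) with hr' | hr'
  · rw [max_eq_right (by linarith), max_eq_left (by linarith), zero_add]
    exact (Flogδ_ge_of_le_neg_one hθ hδ0 hδ1 hr').trans (le_max_left _ _)
  · rw [max_eq_right (by linarith), max_eq_right (by linarith), add_zero, mul_zero]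
    exact le_max_right _ _

lemma ofReal_dist_Icc_le_Flogδ {θ δ : ℝ} (hθ : 0 < θ) (hδ0 : 0 < δ) (hδ1 : δ < 1) (r : ℝ) :
    ENNReal.ofReal (max (r - 1) 0) + ENNReal.ofReal (max (-1 - r) 0)
      ≤ ENNReal.ofReal (2 / (θ * |log δ|)) * ENNReal.ofReal (Flogδ θ δ r) := by
  have hlog : 0 < |log δ| := abs_pos.mpr (log_neg hδ0 hδ1).ne
  have hdist : max (r - 1) 0 + max (-1 - r) 0
      = 2 / (θ * |log δ|) * (θ / 2 * |log δ| * (max (r - 1) 0 + max (-1 - r) 0)) := by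
    field_simp
  calc ENNReal.ofReal (max (r - 1) 0) + ENNReal.ofReal (max (-1 - r) 0)
      = ENNReal.ofReal (max (r - 1) 0 + max (-1 - r) 0) :=
        (ENNReal.ofReal_add (le_max_right _ _) (le_max_right _ _)).symm
    _ ≤ ENNReal.ofReal (2 / (θ * |log δ|) * max (Flogδ θ δ r) 0) := by
        rw [hdist]
        gcongr
        exact Flogδ_ge_dist_Icc hθ.le hδ0 hδ1
    _ = ENNReal.ofReal (2 / (θ * |log δ|)) * ENNReal.ofReal (Flogδ θ δ r) := by
        rw [ENNReal.ofReal_mul (by positivity), ENNReal.ofReal_max, ENNReal.ofReal_zero,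
          max_eq_left zero_le]

theorem log_energy_bound_forces_interval_general
    (θ K : ℝ) (hθ : 0 < θ)
    {X : Type*} [MeasurableSpace X] (μ : Measure X) :
    ∃ C₁ > (0:ℝ), ∃ C₂ > (0:ℝ),
      ∀ δ ∈ Set.Ioo (0:ℝ) 1, ∀ u : X → ℝ, Measurable u →
        (∫⁻ x, ENNReal.ofReal (Flogδ θ δ (u x)) ∂μ) ≤ ENNReal.ofReal K →
        (∫⁻ x, ENNReal.ofReal (max (u x - 1) 0) ∂μ)
          + (∫⁻ x, ENNReal.ofReal (max (-1 - u x) 0) ∂μ)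
          ≤ ENNReal.ofReal (C₁ / |Real.log δ| + C₂ * δ) := by
  refine ⟨2 * max K 1 / θ, by positivity, 1, one_pos, ?_⟩
  rintro δ ⟨hδ0, hδ1⟩ u - hK
  calc (∫⁻ x, ENNReal.ofReal (max (u x - 1) 0) ∂μ)
        + (∫⁻ x, ENNReal.ofReal (max (-1 - u x) 0) ∂μ)
      ≤ ∫⁻ x, ENNReal.ofReal (max (u x - 1) 0) + ENNReal.ofReal (max (-1 - u x) 0) ∂μ :=
        le_lintegral_add _ _
    _ ≤ ∫⁻ x, ENNReal.ofReal (2 / (θ * |log δ|)) * ENNReal.ofReal (Flogδ θ δ (u x)) ∂μ :=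
        lintegral_mono fun x => ofReal_dist_Icc_le_Flogδ hθ hδ0 hδ1 (u x)
    _ = ENNReal.ofReal (2 / (θ * |log δ|)) * ∫⁻ x, ENNReal.ofReal (Flogδ θ δ (u x)) ∂μ :=
        lintegral_const_mul' _ _ ENNReal.ofReal_ne_top
    _ ≤ ENNReal.ofReal (2 / (θ * |log δ|)) * ENNReal.ofReal (max K 1) := by
        gcongr
        exact hK.trans (ENNReal.ofReal_le_ofReal (le_max_left _ _))
    _ = ENNReal.ofReal (2 * max K 1 / θ / |log δ|) := by
        rw [← ENNReal.ofReal_mul (by positivity), div_div, mul_comm θ, div_mul_eq_mul_div]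
    _ ≤ ENNReal.ofReal (2 * max K 1 / θ / |log δ| + 1 * δ) :=
        ENNReal.ofReal_le_ofReal (by linarith)

/-- A uniform bound `K` on the regularized logarithmic energy forces the positive
parts of `u − 1` and `−1 − u` to be small in `L¹`, quantitatively in `δ`: there are
constants `C₁, C₂ > 0` depending only on `θ`, `K` and `μ(X)` such that
`∫ [u−1]₊ + ∫ [−1−u]₊ ≤ C₁/|log δ| + C₂ δ`. -/
theorem log_energy_bound_forces_interval
    (θ K : ℝ) (hθ : 0 < θ) (hK : 0 ≤ K)
    {X : Type*} [MeasurableSpace X] (μ : Measure X) [IsFiniteMeasure μ] :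
    ∃ C₁ > (0:ℝ), ∃ C₂ > (0:ℝ),
      ∀ δ ∈ Set.Ioo (0:ℝ) 1, ∀ u : X → ℝ, Measurable u →
        (∫⁻ x, ENNReal.ofReal (Flogδ θ δ (u x)) ∂μ) ≤ ENNReal.ofReal K →
        (∫⁻ x, ENNReal.ofReal (max (u x - 1) 0) ∂μ)
          + (∫⁻ x, ENNReal.ofReal (max (-1 - u x) 0) ∂μ)
          ≤ ENNReal.ofReal (C₁ / |Real.log δ| + C₂ * δ) :=
  log_energy_bound_forces_interval_general θ K hθ μ
end
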